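/- arXiv:2002.11229 — 5 statements merged into one kernel-verified Lean document; each statement's English description precedes it below -/
import Mathlib

section
/- For positive integers i, j and an integer k with 0 ≤ k ≤ j−1, the identity (1/z;q)_i (qz;q)_j / (q^{−k}/z;q)_i = q^{ik} (q^{1−i}z;q)_k (q^{k+1}z;q)_{j−k} holds as an identity of rational functions in z and q. -/
open Finset

/-- The q-shifted factorial `(a;q)_m = ∏_{l=0}^{m-1} (1 - a q^l)`. -/
noncomputable def qPoch {F : Type*} [Field F] (q a : F) (m : ℕ) : F :=
  ∏ l ∈ Finset.range m, (1 - a * q ^ l)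

lemma qPoch_add {F : Type*} [Field F] (q a : F) (m n : ℕ) :
    qPoch q a (m + n) = qPoch q a m * qPoch q (a * q ^ m) n := by
  unfold qPoch
  rw [Finset.prod_range_add]
  congr 1
  refine Finset.prod_congr rfl fun l _ => ?_
  rw [pow_add]; ring

lemma qPoch_flip {F : Type*} [Field F] (q z : F) (hq : q ≠ 0) (hz : z ≠ 0)
    (t : ℤ) (m : ℕ) :
    qPoch q (q ^ t / z) m =
      (∏ l ∈ Finset.range m, (-(q ^ (t + (l : ℤ))) / z)) *
        qPoch q (q ^ (1 - t - (m : ℤ)) * z) m := by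
  unfold qPoch
  rw [← Finset.prod_range_reflect (fun l => (1 - q ^ (1 - t - (m : ℤ)) * z * q ^ l)) m,
    ← Finset.prod_mul_distrib]
  refine Finset.prod_congr rfl fun l hl => ?_
  have hl' : l < m := Finset.mem_range.mp hl
  have h1 : q ^ t / z * q ^ l = q ^ (t + (l : ℤ)) / z := by
    rw [zpow_add₀ hq, zpow_natCast]; ring
  have h2 : q ^ (1 - t - (m : ℤ)) * z * q ^ (m - 1 - l) = q ^ (-(t + (l : ℤ))) * z := by
    have hc : ((m - 1 - l : ℕ) : ℤ) = (m : ℤ) - 1 - l := by omega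
    have he : (1 - t - (m : ℤ)) + ((m : ℤ) - 1 - (l : ℤ)) = -(t + (l : ℤ)) := by ring
    rw [← zpow_natCast q (m - 1 - l), hc, mul_right_comm, ← zpow_add₀ hq, he]
  rw [h1, h2]
  symm
  have hu : q ^ (t + (l : ℤ)) * q ^ (-(t + (l : ℤ))) = 1 := by
    have h0 : t + (l : ℤ) + (-(t + (l : ℤ))) = 0 := by ring
    rw [← zpow_add₀ hq, h0, zpow_zero]
  calc (-(q ^ (t + (l : ℤ))) / z) * (1 - q ^ (-(t + (l : ℤ))) * z)
      = -(q ^ (t + (l : ℤ))) / z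
        + (q ^ (t + (l : ℤ)) * q ^ (-(t + (l : ℤ)))) * (z / z) := by ring
    _ = 1 - q ^ (t + (l : ℤ)) / z := by rw [hu, div_self hz]; ring

/-- For positive integers `i, j` and `0 ≤ k ≤ j-1`,
`(1/z;q)_i (qz;q)_j / (q^{-k}/z;q)_i = q^{ik} (q^{1-i}z;q)_k (q^{k+1}z;q)_{j-k}`. -/
theorem qPoch_ratio_eq_one {F : Type*} [Field F] (q z : F) (hq : q ≠ 0) (hz : z ≠ 0)
    (i j k : ℕ) (hi : 0 < i) (hj : 0 < j) (hk : k ≤ j - 1)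
    (hden : qPoch q (q ^ (-(k : ℤ)) / z) i ≠ 0) :
    qPoch q (1 / z) i * qPoch q (q * z) j / qPoch q (q ^ (-(k : ℤ)) / z) i =
      q ^ (i * k) * qPoch q (q ^ (1 - (i : ℤ)) * z) k * qPoch q (q ^ (k + 1) * z) (j - k) := by
  set A := qPoch q (1 / z) i with hA
  set D := qPoch q (q ^ (-(k : ℤ)) / z) i with hD
  set Bk := qPoch q (q * z) k with hBk
  set C2 := qPoch q (q ^ (k + 1) * z) (j - k) with hC2
  set P := qPoch q (q ^ (1 - (i : ℤ)) * z) k with hP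
  set Dk := qPoch q (q ^ (-(k : ℤ)) / z) k with hDk
  set E := qPoch q (q ^ ((i : ℤ) - k) / z) k with hE
  set S1 := ∏ l ∈ Finset.range k, (-(q ^ (-(k : ℤ) + (l : ℤ))) / z) with hS1
  -- split identities
  have hsplit1 : Dk * A = D * E := by
    have e1 : qPoch q (q ^ (-(k : ℤ)) / z) (k + i) = Dk * A := by
      rw [qPoch_add]
      congr 2
      rw [← zpow_natCast q k, div_mul_eq_mul_div, ← zpow_add₀ hq]
      simp
    have e2 : qPoch q (q ^ (-(k : ℤ)) / z) (i + k) = D * E := by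
      rw [qPoch_add]
      congr 2
      rw [← zpow_natCast q i, div_mul_eq_mul_div, ← zpow_add₀ hq]
      congr 1
      ring
    rw [← e1, ← e2, add_comm]
  have hB : qPoch q (q * z) j = Bk * C2 := by
    have hkj : k + (j - k) = j := by omega
    rw [← hkj, qPoch_add]
    congr 2
    rw [pow_succ]
    ring
  -- flips
  have hflip1 : Dk = S1 * Bk := by
    have h := qPoch_flip q z hq hz (-(k : ℤ)) k
    have harg : (1 : ℤ) - (-(k : ℤ)) - (k : ℤ) = 1 := by ring
    rw [harg, zpow_one] at h
    exact h
  have hflip2 : E = (q ^ ((i : ℤ) * k) * S1) * P := by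
    have h := qPoch_flip q z hq hz ((i : ℤ) - k) k
    have harg : (1 : ℤ) - ((i : ℤ) - k) - (k : ℤ) = 1 - i := by ring
    rw [harg] at h
    rw [hE, h]
    congr 1
    calc ∏ l ∈ Finset.range k, (-(q ^ ((i : ℤ) - k + (l : ℤ))) / z)
        = ∏ l ∈ Finset.range k, (q ^ (i : ℤ) * (-(q ^ (-(k : ℤ) + (l : ℤ))) / z)) := by
          refine Finset.prod_congr rfl fun l _ => ?_
          rw [show (i : ℤ) - k + (l : ℤ) = (i : ℤ) + (-(k : ℤ) + l) by ring,
            zpow_add₀ hq]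
          ring
      _ = (q ^ (i : ℤ)) ^ k * S1 := by
          rw [Finset.prod_mul_distrib, Finset.prod_const, Finset.card_range]
      _ = q ^ ((i : ℤ) * k) * S1 := by
          rw [← zpow_natCast (q ^ (i : ℤ)) k, ← zpow_mul]
  have hS1ne : S1 ≠ 0 := by
    refine Finset.prod_ne_zero_iff.mpr fun l _ => ?_
    exact div_ne_zero (neg_ne_zero.mpr (zpow_ne_zero _ hq)) hz
  have key : Bk * A = q ^ ((i : ℤ) * k) * D * P := by
    apply mul_left_cancel₀ hS1ne
    calc S1 * (Bk * A) = (S1 * Bk) * A := by ring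
      _ = Dk * A := by rw [hflip1]
      _ = D * E := hsplit1
      _ = D * ((q ^ ((i : ℤ) * k) * S1) * P) := by rw [hflip2]
      _ = S1 * (q ^ ((i : ℤ) * k) * D * P) := by ring
  have hpow : (q : F) ^ (i * k) = q ^ ((i : ℤ) * k) := by
    rw [← zpow_natCast q (i * k)]
    norm_cast
  rw [div_eq_iff hden, hB, hpow]
  linear_combination C2 * key
end

section
/- For positive integers i, j and an integer k with 0 ≤ k ≤ j−1, the identity (z;q)_j (q/z;q)_i / (q^{−k}/z;q)_i = q^{(k+1)i} (q^{−i}z;q)_{k+1} (q^{k+1}z;q)_{j−k−1} holds as an identity of rational functions in z and q. -/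
open Finset

/-- For positive integers `i, j` and `0 ≤ k ≤ j-1`,
`(z;q)_j (q/z;q)_i / (q^{-k}/z;q)_i = q^{(k+1)i} (q^{-i}z;q)_{k+1} (q^{k+1}z;q)_{j-k-1}`. -/
theorem qPoch_ratio_eq_two {F : Type*} [Field F] (q z : F) (hq : q ≠ 0) (hz : z ≠ 0)
    (i j k : ℕ) (hi : 0 < i) (hj : 0 < j) (hk : k ≤ j - 1)
    (hden : qPoch q (q ^ (-(k : ℤ)) / z) i ≠ 0) :
    qPoch q z j * qPoch q (q / z) i / qPoch q (q ^ (-(k : ℤ)) / z) i =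
      q ^ ((k + 1) * i) * qPoch q (q ^ (-(i : ℤ)) * z) (k + 1) *
        qPoch q (q ^ (k + 1) * z) (j - k - 1) := by
  obtain ⟨jj, rfl⟩ : ∃ jj, j = (k + 1) + jj := ⟨j - k - 1, by omega⟩
  have hjj : (k + 1) + jj - k - 1 = jj := by omega
  rw [hjj, div_eq_iff hden]
  set f : ℤ → F := fun e => z - q ^ e with hf
  -- the key multiset identity
  have key : (∏ m ∈ range (k+1), f (-(m:ℤ))) * (∏ l ∈ range i, f ((l:ℤ)+1)) =
      (∏ m ∈ range (k+1), f ((i:ℤ)-(m:ℤ))) * (∏ l ∈ range i, f ((l:ℤ)-(k:ℤ))) := by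
    have h1 : ∏ t ∈ range ((k+1)+i), f ((t:ℤ)-(k:ℤ)) =
        (∏ m ∈ range (k+1), f (-(m:ℤ))) * (∏ l ∈ range i, f ((l:ℤ)+1)) := by
      rw [Finset.prod_range_add]
      congr 1
      · rw [← Finset.prod_range_reflect]
        apply Finset.prod_congr rfl
        intro m hm
        simp only [mem_range] at hm
        congr 1
        have : k + 1 - 1 - m = k - m := by omega
        rw [this]
        push_cast [Nat.cast_sub (by omega : m ≤ k)]
        ring
      · apply Finset.prod_congr rfl
        intro l _
        congr 1
        push_cast
        ring
    have h2 : ∏ t ∈ range ((k+1)+i), f ((t:ℤ)-(k:ℤ)) =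
        (∏ m ∈ range (k+1), f ((i:ℤ)-(m:ℤ))) * (∏ l ∈ range i, f ((l:ℤ)-(k:ℤ))) := by
      rw [Nat.add_comm (k+1) i, Finset.prod_range_add]
      rw [mul_comm]
      congr 1
      · rw [← Finset.prod_range_reflect]
        apply Finset.prod_congr rfl
        intro m hm
        simp only [mem_range] at hm
        congr 1
        have : k + 1 - 1 - m = k - m := by omega
        rw [this]
        push_cast [Nat.cast_sub (by omega : m ≤ k)]
        ring
    rw [← h1, h2]
  -- rewrite each qPoch as unit * f-product
  have e1 : qPoch q z (k+1) =
      (∏ m ∈ range (k+1), -(q ^ m)) * ∏ m ∈ range (k+1), f (-(m:ℤ)) := by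
    rw [← Finset.prod_mul_distrib]
    apply Finset.prod_congr rfl
    intro m _
    have hqm : (q:F) ^ m ≠ 0 := pow_ne_zero _ hq
    simp only [hf, zpow_neg, zpow_natCast]
    field_simp
    ring
  have e2 : qPoch q (q / z) i =
      (∏ l ∈ range i, z⁻¹) * ∏ l ∈ range i, f ((l:ℤ)+1) := by
    rw [← Finset.prod_mul_distrib]
    apply Finset.prod_congr rfl
    intro l _
    have : (q:F) ^ ((l:ℤ)+1) = q ^ (l+1) := by
      rw [← zpow_natCast]; norm_cast
    simp only [hf, this, pow_succ]
    field_simp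
  have e3 : qPoch q (q ^ (-(k : ℤ)) / z) i =
      (∏ l ∈ range i, z⁻¹) * ∏ l ∈ range i, f ((l:ℤ)-(k:ℤ)) := by
    rw [← Finset.prod_mul_distrib]
    apply Finset.prod_congr rfl
    intro l _
    have hqk : (q:F) ^ ((l:ℤ)-(k:ℤ)) = q ^ (-(k:ℤ)) * q ^ l := by
      rw [← zpow_natCast q l, ← zpow_add₀ hq]
      congr 1; ring
    simp only [hf, hqk]
    field_simp
  have e4 : q ^ ((k + 1) * i) * qPoch q (q ^ (-(i : ℤ)) * z) (k + 1) =
      (∏ m ∈ range (k+1), -(q ^ m)) * ∏ m ∈ range (k+1), f ((i:ℤ)-(m:ℤ)) := by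
    have hpow : (q:F) ^ ((k + 1) * i) = ∏ _m ∈ range (k+1), q ^ i := by
      rw [Finset.prod_const, Finset.card_range, ← pow_mul, Nat.mul_comm]
    rw [hpow, qPoch, ← Finset.prod_mul_distrib, ← Finset.prod_mul_distrib]
    apply Finset.prod_congr rfl
    intro m _
    have hqi : (q:F) ^ ((i:ℤ)-(m:ℤ)) = q ^ i * (q ^ m)⁻¹ := by
      rw [← zpow_natCast q i, ← zpow_natCast q m, ← zpow_neg, ← zpow_add₀ hq,
        sub_eq_add_neg]
    have hqineg : (q:F) ^ (-(i:ℤ)) = (q ^ i)⁻¹ := by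
      rw [zpow_neg, zpow_natCast]
    have hqm : (q:F) ^ m ≠ 0 := pow_ne_zero _ hq
    have hqi' : (q:F) ^ i ≠ 0 := pow_ne_zero _ hq
    simp only [hf, hqi, hqineg]
    field_simp
    ring
  -- split qPoch q z ((k+1)+jj)
  have hsplit : qPoch q z ((k+1)+jj) = qPoch q z (k+1) * qPoch q (q ^ (k+1) * z) jj := by
    rw [qPoch, qPoch, qPoch, Finset.prod_range_add]
    congr 1
    apply Finset.prod_congr rfl
    intro l _
    rw [pow_add]
    ring
  rw [hsplit, e1, e2, e3, e4]
  linear_combination ((∏ m ∈ range (k+1), -(q ^ m)) * (∏ l ∈ range i, z⁻¹) *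
    qPoch q (q ^ (k+1) * z) jj) * key
end

section
/- Let I ⊆ {1,…,n} have cardinality at least two, let a = (a_1,…,a_n) be a sequence of integers, and let i ∈ I. Then ∑_{∅ ≠ J ⊆ I∖{i}} (−1)^{|J|} q^{L_{I∖{i},J}(a^{(i)}) + a_J} = − q^{L_{I,{i}}(a) − ∑_{j=i+1}^{n} a_j}, where a_J := ∑_{j ∈ J} a_j. -/
open Finset

/-- The indeterminate `q` in the field of rational functions `ℚ(q)`. -/
noncomputable def q : RatFunc ℚ := RatFunc.X

/-- `L_{I,J}(a) = ∑_{(u,v) : u ∈ I, u ≤ v ≤ n, v ∉ J} a_v`. -/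
def Lsum {n : ℕ} (I J : Finset (Fin n)) (a : Fin n → ℤ) : ℤ :=
  ∑ u ∈ I, ∑ v ∈ Finset.univ.filter (fun v => u ≤ v ∧ v ∉ J), a v

/-- For `i ∈ I` and `J ⊆ I∖{i}`, the quantity `L_{I∖{i},J}(a^{(i)})`, computed via the
reindexing convention: `∑_{(u,v) : u ∈ I∖{i}, u ≤ v ≤ n, v ∉ J, v ≠ i} a_v`. -/
def LsumDel {n : ℕ} (i : Fin n) (I J : Finset (Fin n)) (a : Fin n → ℤ) : ℤ :=
  ∑ u ∈ I.erase i, ∑ v ∈ Finset.univ.filter (fun v => u ≤ v ∧ v ∉ J ∧ v ≠ i), a v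

lemma q_ne_zero : q ≠ 0 := RatFunc.X_ne_zero

lemma q_zpow_sum {α : Type*} (s : Finset α) (e : α → ℤ) :
    q ^ (∑ j ∈ s, e j) = ∏ j ∈ s, q ^ e j := by
  classical
  induction s using Finset.cons_induction with
  | empty => simp
  | cons a s ha ih =>
    rw [Finset.sum_cons, Finset.prod_cons, zpow_add₀ q_ne_zero, ih]

/-- shift of the exponent when J grows -/
lemma lsumdel_shift {n : ℕ} (i : Fin n) (I : Finset (Fin n)) (a : Fin n → ℤ)
    (J : Finset (Fin n)) (hJ : J ⊆ I.erase i) :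
    LsumDel i I J a + ∑ j ∈ J, a j =
      LsumDel i I ∅ a + ∑ j ∈ J, (1 - (((I.erase i).filter (fun u => u ≤ j)).card : ℤ)) * a j := by
  classical
  have hiJ : i ∉ J := fun h => (Finset.mem_erase.mp (hJ h)).1 rfl
  have key : ∀ u : Fin n,
      (∑ v ∈ Finset.univ.filter (fun v => u ≤ v ∧ v ∉ J ∧ v ≠ i), a v) =
      (∑ v ∈ Finset.univ.filter (fun v => u ≤ v ∧ v ∉ (∅ : Finset (Fin n)) ∧ v ≠ i), a v)
        - ∑ v ∈ J.filter (fun v => u ≤ v), a v := by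
    intro u
    have hJf : J.filter (fun v => u ≤ v) = Finset.univ.filter (fun v => v ∈ J ∧ u ≤ v) := by
      ext v; simp
    rw [hJf, Finset.sum_filter, Finset.sum_filter, Finset.sum_filter,
      ← Finset.sum_sub_distrib]
    refine Finset.sum_congr rfl fun v _ => ?_
    by_cases hvJ : v ∈ J
    · have hvi : v ≠ i := fun h => hiJ (h ▸ hvJ)
      by_cases huv : u ≤ v <;> simp [hvJ, hvi, huv]
    · by_cases huv : u ≤ v <;> simp [hvJ, huv]
  unfold LsumDel
  rw [Finset.sum_congr rfl fun u _ => key u, Finset.sum_sub_distrib]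
  have swap : (∑ u ∈ I.erase i, ∑ v ∈ J.filter (fun v => u ≤ v), a v)
      = ∑ v ∈ J, (((I.erase i).filter (fun u => u ≤ v)).card : ℤ) * a v := by
    simp_rw [Finset.sum_filter]
    rw [Finset.sum_comm]
    refine Finset.sum_congr rfl fun v _ => ?_
    rw [← Finset.sum_filter, Finset.sum_const, nsmul_eq_mul]
  rw [swap]
  have h2 : ∑ x ∈ J, (1 - (((I.erase i).filter (fun u => u ≤ x)).card : ℤ)) * a x
      = ∑ x ∈ J, a x - ∑ x ∈ J, (((I.erase i).filter (fun u => u ≤ x)).card : ℤ) * a x := by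
    rw [← Finset.sum_sub_distrib]
    exact Finset.sum_congr rfl fun x _ => by ring
  rw [h2]; ring

lemma prod_neg' {α : Type*} (t : Finset α) (f : α → RatFunc ℚ) :
    ∏ j ∈ t, (-f j) = (-1 : RatFunc ℚ) ^ t.card * ∏ j ∈ t, f j := by
  induction t using Finset.cons_induction with
  | empty => simp
  | cons b s hb ih =>
    rw [Finset.prod_cons, Finset.prod_cons, ih, Finset.card_cons, pow_succ]
    ring

/-- For `I ⊆ {1,…,n}` with `|I| ≥ 2` and `i ∈ I`,
`∑_{∅ ≠ J ⊆ I∖{i}} (-1)^{|J|} q^{L_{I∖{i},J}(a^{(i)}) + a_J}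
  = - q^{L_{I,{i}}(a) - ∑_{j=i+1}^{n} a_j}`. -/
theorem alternating_sum_qpow (n : ℕ) (I : Finset (Fin n)) (hI : 2 ≤ I.card)
    (a : Fin n → ℤ) (i : Fin n) (hi : i ∈ I) :
    ∑ J ∈ (I.erase i).powerset.filter (fun J => J.Nonempty),
        (-1 : RatFunc ℚ) ^ J.card * q ^ (LsumDel i I J a + ∑ j ∈ J, a j) =
      - q ^ (Lsum I {i} a - ∑ j ∈ Finset.univ.filter (fun j => i < j), a j) := by
  classical
  set I' := I.erase i with hI'def
  have hI'ne : I'.Nonempty := by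
    rw [← Finset.card_pos, hI'def, Finset.card_erase_of_mem hi]
    omega
  set x : Fin n → RatFunc ℚ :=
    fun j => q ^ ((1 - ((I'.filter (fun u => u ≤ j)).card : ℤ)) * a j) with hx
  set L0 : ℤ := LsumDel i I ∅ a with hL0
  -- Step 1: rewrite each summand
  have hsummand : ∀ J ∈ I'.powerset.filter (fun J => J.Nonempty),
      (-1 : RatFunc ℚ) ^ J.card * q ^ (LsumDel i I J a + ∑ j ∈ J, a j)
        = q ^ L0 * ((-1 : RatFunc ℚ) ^ J.card * ∏ j ∈ J, x j) := by
    intro J hJ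
    rw [Finset.mem_filter, Finset.mem_powerset] at hJ
    rw [lsumdel_shift i I a J hJ.1, zpow_add₀ q_ne_zero, q_zpow_sum]
    ring
  rw [Finset.sum_congr rfl hsummand, ← Finset.mul_sum]
  -- Step 2: full alternating sum equals a product
  have hfull : ∏ j ∈ I', (1 - x j)
      = ∑ J ∈ I'.powerset, (-1 : RatFunc ℚ) ^ J.card * ∏ j ∈ J, x j := by
    have hpa := Finset.prod_add (fun j => -x j) (fun _ => (1 : RatFunc ℚ)) I'
    simp only [Finset.prod_const_one, mul_one] at hpa
    calc ∏ j ∈ I', (1 - x j) = ∏ j ∈ I', (-x j + 1) :=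
          Finset.prod_congr rfl fun j _ => sub_eq_neg_add 1 (x j)
      _ = ∑ t ∈ I'.powerset, ∏ j ∈ t, (-x j) := hpa
      _ = ∑ t ∈ I'.powerset, (-1 : RatFunc ℚ) ^ t.card * ∏ j ∈ t, x j :=
          Finset.sum_congr rfl fun t _ => prod_neg' t x
  -- Step 3: the product vanishes (factor at the minimum is zero)
  have hprod0 : ∏ j ∈ I', (1 - x j) = 0 := by
    refine Finset.prod_eq_zero (Finset.min'_mem I' hI'ne) ?_
    have hfilt : I'.filter (fun u => u ≤ I'.min' hI'ne) = {I'.min' hI'ne} := by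
      ext u
      simp only [Finset.mem_filter, Finset.mem_singleton]
      constructor
      · rintro ⟨hu, hle⟩
        exact le_antisymm hle (Finset.min'_le I' u hu)
      · rintro rfl
        exact ⟨Finset.min'_mem I' hI'ne, le_refl _⟩
    simp only [hx]
    rw [hfilt]
    simp
  -- Step 4: remove the empty set
  have hfilter : I'.powerset.filter (fun J => J.Nonempty) = I'.powerset.erase ∅ := by
    ext J
    simp [Finset.nonempty_iff_ne_empty, and_comm]
  have hsum : ∑ J ∈ I'.powerset.filter (fun J => J.Nonempty),
      (-1 : RatFunc ℚ) ^ J.card * ∏ j ∈ J, x j = -1 := by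
    have hempty : (∅ : Finset (Fin n)) ∈ I'.powerset := by simp
    have hadd := Finset.add_sum_erase I'.powerset
      (fun J => (-1 : RatFunc ℚ) ^ J.card * ∏ j ∈ J, x j) hempty
    rw [hfilter]
    rw [← hfull, hprod0] at hadd
    simp only [Finset.card_empty, pow_zero, Finset.prod_empty, mul_one] at hadd
    linear_combination hadd
  rw [hsum]
  -- Step 5: identify the exponents
  have hexp : L0 = Lsum I {i} a - ∑ j ∈ Finset.univ.filter (fun j => i < j), a j := by
    have hLs : Lsum I {i} a =
        (∑ v ∈ Finset.univ.filter (fun v => i ≤ v ∧ v ∉ ({i} : Finset (Fin n))), a v)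
          + ∑ u ∈ I', ∑ v ∈ Finset.univ.filter (fun v => u ≤ v ∧ v ∉ ({i} : Finset (Fin n))), a v := by
      simp only [Lsum]
      rw [← Finset.add_sum_erase _ _ hi]
    have hinner : ∀ u : Fin n,
        Finset.univ.filter (fun v => u ≤ v ∧ v ∉ ({i} : Finset (Fin n)))
          = Finset.univ.filter (fun v => u ≤ v ∧ v ∉ (∅ : Finset (Fin n)) ∧ v ≠ i) := by
      intro u; ext v; simp
    have hfirst : Finset.univ.filter (fun v => i ≤ v ∧ v ∉ ({i} : Finset (Fin n)))
        = Finset.univ.filter (fun j => i < j) := by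
      ext v
      simp only [Finset.mem_filter, Finset.mem_univ, true_and, Finset.mem_singleton,
        lt_iff_le_and_ne]
      tauto
    rw [hLs, hfirst, hL0]
    simp only [LsumDel]
    simp_rw [hinner]
    ring
  rw [hexp]
  ring
end

section
/- Let I be a non-empty subset of {1,…,n}, J a non-empty subset of I, and a = (a_1,…,a_n) a sequence of integers. Then ∑_{i ∈ J} (−1)^{|J∖{i}|+1} q^{∑_{j=i+1}^{n} a_j + L_{I∖{i}, J∖{i}}(a^{(i)})} (1 − q^{a_i}) = (−1)^{|J|} q^{L_{I,J}(a)} (1 − q^{a_J}), where a_J := ∑_{j ∈ J} a_j. -/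
open Finset

lemma q_ne : (q : RatFunc ℚ) ≠ 0 := RatFunc.X_ne_zero

/-- Telescoping lemma. -/
lemma tele {n : ℕ} (a : Fin n → ℤ) (J : Finset (Fin n)) (hJ : J.Nonempty) :
    ∑ i ∈ J, (q ^ (∑ j ∈ J.filter (fun j => i < j), a j)
      - q ^ (∑ j ∈ J.filter (fun j => i ≤ j), a j)) = 1 - q ^ (∑ j ∈ J, a j) := by
  classical
  induction J using Finset.strongInduction with
  | _ J ih =>
    have hmJ := J.min'_mem hJ
    set m := J.min' hJ with hm
    rw [← Finset.add_sum_erase _ _ hmJ]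
    have h1 : J.filter (fun j => m < j) = J.erase m := by
      ext j
      simp only [mem_filter, mem_erase]
      constructor
      · rintro ⟨hj, hlt⟩; exact ⟨ne_of_gt hlt, hj⟩
      · rintro ⟨hne, hj⟩; exact ⟨hj, lt_of_le_of_ne (J.min'_le j hj) (Ne.symm hne)⟩
    have h2 : J.filter (fun j => m ≤ j) = J :=
      Finset.filter_true_of_mem (fun j hj => J.min'_le j hj)
    rw [h1, h2]
    have hrest : ∀ i ∈ J.erase m,
        (q ^ (∑ j ∈ J.filter (fun j => i < j), a j)
          - q ^ (∑ j ∈ J.filter (fun j => i ≤ j), a j))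
        = (q ^ (∑ j ∈ (J.erase m).filter (fun j => i < j), a j)
          - q ^ (∑ j ∈ (J.erase m).filter (fun j => i ≤ j), a j)) := by
      intro i hi
      have hmi : m < i := lt_of_le_of_ne (J.min'_le i (mem_of_mem_erase hi))
        (Ne.symm (ne_of_mem_erase hi))
      have e1 : J.filter (fun j => i < j) = (J.erase m).filter (fun j => i < j) := by
        ext j; simp only [mem_filter, mem_erase]
        constructor
        · rintro ⟨hj, h⟩; exact ⟨⟨ne_of_gt (hmi.trans h), hj⟩, h⟩
        · rintro ⟨⟨_, hj⟩, h⟩; exact ⟨hj, h⟩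
      have e2 : J.filter (fun j => i ≤ j) = (J.erase m).filter (fun j => i ≤ j) := by
        ext j; simp only [mem_filter, mem_erase]
        constructor
        · rintro ⟨hj, h⟩; exact ⟨⟨ne_of_gt (lt_of_lt_of_le hmi h), hj⟩, h⟩
        · rintro ⟨⟨_, hj⟩, h⟩; exact ⟨hj, h⟩
      rw [e1, e2]
    rw [Finset.sum_congr rfl hrest]
    by_cases he : (J.erase m).Nonempty
    · rw [ih (J.erase m) (Finset.erase_ssubset hmJ) he]
      have hsplit : ∑ j ∈ J, a j = a m + ∑ j ∈ J.erase m, a j :=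
        (Finset.add_sum_erase _ _ hmJ).symm
      rw [hsplit, zpow_add₀ q_ne]
      ring
    · rw [Finset.not_nonempty_iff_eq_empty] at he
      rw [he]
      simp

/-- Exponent identity. -/
lemma term_exp {n : ℕ} (I J : Finset (Fin n)) (hJI : J ⊆ I) (a : Fin n → ℤ)
    (i : Fin n) (hi : i ∈ J) :
    (∑ j ∈ Finset.univ.filter (fun j => i < j), a j) + LsumDel i I (J.erase i) a
      = Lsum I J a + ∑ j ∈ J.filter (fun j => i < j), a j := by
  classical
  set g : Fin n → ℤ := fun u => ∑ v ∈ Finset.univ.filter (fun v => u ≤ v ∧ v ∉ J), a v with hg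
  have hA : LsumDel i I (J.erase i) a = ∑ u ∈ I.erase i, g u := by
    apply Finset.sum_congr rfl
    intro u _
    apply Finset.sum_congr _ (fun _ _ => rfl)
    ext v
    simp only [mem_filter, mem_univ, true_and]
    constructor
    · rintro ⟨huv, hvJ, hvi⟩
      exact ⟨huv, fun h => hvJ (Finset.mem_erase.2 ⟨hvi, h⟩)⟩
    · rintro ⟨huv, hvJ⟩
      exact ⟨huv, fun h => hvJ (Finset.mem_of_mem_erase h), fun h => hvJ (h ▸ hi)⟩
  have hB : Lsum I J a = g i + ∑ u ∈ I.erase i, g u :=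
    (Finset.add_sum_erase _ _ (hJI hi)).symm
  have hC : (∑ j ∈ Finset.univ.filter (fun j => i < j), a j)
      = g i + ∑ j ∈ J.filter (fun j => i < j), a j := by
    have hsplit := Finset.sum_filter_add_sum_filter_not
      (Finset.univ.filter (fun j => i < j)) (fun j => j ∈ J) a
    have e1 : (Finset.univ.filter (fun j => i < j)).filter (fun j => j ∈ J)
        = J.filter (fun j => i < j) := by
      ext j; simp only [mem_filter, mem_univ, true_and]; tauto
    have e2 : (Finset.univ.filter (fun j => i < j)).filter (fun j => ¬ j ∈ J)
        = Finset.univ.filter (fun v => i ≤ v ∧ v ∉ J) := by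
      ext j; simp only [mem_filter, mem_univ, true_and]
      constructor
      · rintro ⟨h1, h2⟩; exact ⟨le_of_lt h1, h2⟩
      · rintro ⟨h1, h2⟩
        exact ⟨lt_of_le_of_ne h1 (fun h => h2 (h ▸ hi)), h2⟩
    rw [e1, e2] at hsplit
    rw [← hsplit, hg]
    ring
  rw [hA, hB, hC]
  ring

/-- For non-empty `J ⊆ I ⊆ {1,…,n}`,
`∑_{i ∈ J} (-1)^{|J∖{i}|+1} q^{∑_{j=i+1}^n a_j + L_{I∖{i},J∖{i}}(a^{(i)})} (1 - q^{a_i})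
  = (-1)^{|J|} q^{L_{I,J}(a)} (1 - q^{a_J})`. -/
theorem telescoping_sum (n : ℕ) (I J : Finset (Fin n)) (hI : I.Nonempty)
    (hJ : J.Nonempty) (hJI : J ⊆ I) (a : Fin n → ℤ) :
    ∑ i ∈ J, (-1 : RatFunc ℚ) ^ ((J.erase i).card + 1) *
        q ^ ((∑ j ∈ Finset.univ.filter (fun j => i < j), a j) + LsumDel i I (J.erase i) a) *
        (1 - q ^ a i) =
      (-1 : RatFunc ℚ) ^ J.card * q ^ (Lsum I J a) * (1 - q ^ (∑ j ∈ J, a j)) := by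
  classical
  have key : ∀ i ∈ J,
      (-1 : RatFunc ℚ) ^ ((J.erase i).card + 1) *
        q ^ ((∑ j ∈ Finset.univ.filter (fun j => i < j), a j) + LsumDel i I (J.erase i) a) *
        (1 - q ^ a i)
      = ((-1 : RatFunc ℚ) ^ J.card * q ^ (Lsum I J a)) *
          (q ^ (∑ j ∈ J.filter (fun j => i < j), a j)
            - q ^ (∑ j ∈ J.filter (fun j => i ≤ j), a j)) := by
    intro i hi
    have hcard : (J.erase i).card + 1 = J.card := Finset.card_erase_add_one hi
    have hexp := term_exp I J hJI a i hi
    have hS' : ∑ j ∈ J.filter (fun j => i ≤ j), a j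
        = a i + ∑ j ∈ J.filter (fun j => i < j), a j := by
      have hins : J.filter (fun j => i ≤ j) = insert i (J.filter (fun j => i < j)) := by
        ext j; simp only [mem_filter, mem_insert]
        constructor
        · rintro ⟨hj, h⟩
          rcases eq_or_lt_of_le h with h' | h'
          · left; exact h'.symm
          · right; exact ⟨hj, h'⟩
        · rintro (rfl | ⟨hj, h⟩)
          · exact ⟨hi, le_refl _⟩
          · exact ⟨hj, le_of_lt h⟩
      rw [hins, Finset.sum_insert (by simp)]
    rw [hcard, hexp, hS']
    rw [zpow_add₀ q_ne, zpow_add₀ q_ne (a i)]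
    ring
  rw [Finset.sum_congr rfl key, ← Finset.mul_sum, tele a J hJ]
end

section
/- The q-Dyson constant term identity (Zeilberger–Bressoud theorem): for non-negative integers a_1,…,a_n, the constant term in x_1,…,x_n of ∏_{1 ≤ i < j ≤ n} (x_i/x_j; q)_{a_i} (q x_j/x_i; q)_{a_j} equals (q;q)_{a_1+⋯+a_n} / ((q;q)_{a_1} ⋯ (q;q)_{a_n}). -/
/-!
Károlyi–Nagy's proof. Clearing denominators turns the constant term into the coefficient of
`∏ x_k ^ (σ - a_k)`, `σ = ∑ a`, in a polynomial of total degree `∑ (σ - a_k)`. For such a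
top-degree coefficient, Lagrange interpolation on a grid `∏ A_k` with `#A_k = σ - a_k + 1` gives
an explicit weighted sum of values on the grid. Take `A_k = {1, q, …, q ^ (σ - a_k)}`: at
`x_k = q ^ t_k` a factor vanishes unless the intervals `[t_k, t_k + a_k)` are laid out in index
order without gaps, so a single grid point, `t_k = a_0 + ⋯ + a_(k-1)`, survives, and its term
telescopes to `(q;q)_σ / ∏ (q;q)_(a_k)`.
-/

open Finset MvPolynomial

/-- `(q;q)_m = ∏_{l=1}^{m} (1 - q^l)`. -/
noncomputable def qFac (m : ℕ) : RatFunc ℚ :=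
  ∏ l ∈ Finset.range m, (1 - q ^ (l + 1))

/-- The q-Dyson product `∏_{i<j} (x_i/x_j;q)_{a_i} (q x_j/x_i;q)_{a_j}`, cleared of
denominators: each factor `(1 - q^l x_i/x_j)` is replaced by `(x_j - q^l x_i)`, so that
multiplying the q-Dyson Laurent polynomial by `∏_{i<j} x_j^{a_i} x_i^{a_j}` gives this
genuine polynomial. -/
noncomputable def dysonPoly (n : ℕ) (a : Fin n → ℕ) : MvPolynomial (Fin n) (RatFunc ℚ) :=
  ∏ p ∈ Finset.univ.filter (fun p : Fin n × Fin n => p.1 < p.2),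
    ((∏ l ∈ Finset.range (a p.1), (X p.2 - C (q ^ l) * X p.1)) *
     (∏ l ∈ Finset.range (a p.2), (X p.1 - C (q ^ (l + 1)) * X p.2)))

section Lagrange

variable {F : Type*} [Field F] [DecidableEq F]

theorem sum_pow_div_prod_erase_sub (s : Finset F) {e : ℕ} (he : e < #s) :
    ∑ x ∈ s, x ^ e / ∏ y ∈ s.erase x, (x - y) = if e + 1 = #s then 1 else 0 := by
  have hdeg : ((Polynomial.X : Polynomial F) ^ e).degree < #s := by
    rw [Polynomial.degree_X_pow]; exact_mod_cast he
  have := Lagrange.coeff_eq_sum (v := id) Function.injective_id.injOn hdeg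
  simp only [Polynomial.coeff_X_pow, Polynomial.eval_pow, Polynomial.eval_X, id] at this
  rw [← this]
  grind

/-- Lasoń's coefficient formula (a quantitative Combinatorial Nullstellensatz). -/
theorem MvPolynomial.coeff_eq_sum_piFinset {ι : Type*} [Fintype ι] [DecidableEq ι]
    (d : ι → ℕ) (A : ι → Finset F) (hA : ∀ i, #(A i) = d i + 1)
    (f : MvPolynomial ι F) (hf : f.totalDegree ≤ ∑ i, d i) :
    coeff (Finsupp.equivFunOnFinite.symm d) f =
      ∑ z ∈ Fintype.piFinset A, eval z f / ∏ i, ∏ y ∈ (A i).erase (z i), (z i - y) := by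
  have hmono : ∀ m ∈ f.support, coeff (Finsupp.equivFunOnFinite.symm d) (monomial m (coeff m f)) =
      ∑ z ∈ Fintype.piFinset A,
        eval z (monomial m (coeff m f)) / ∏ i, ∏ y ∈ (A i).erase (z i), (z i - y) := by
    intro m hm
    have hm : ∑ i, m i ≤ ∑ i, d i :=
      (Finsupp.sum_fintype _ _ fun _ => rfl).symm.trans_le ((le_totalDegree hm).trans hf)
    simp_rw [eval_monomial, Finsupp.prod_fintype _ _ (fun i => pow_zero _), mul_div_assoc]
    rw [← mul_sum]
    simp_rw [← prod_div_distrib]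
    rw [← prod_univ_sum A (fun i x => x ^ m i / ∏ y ∈ (A i).erase x, (x - y)), coeff_monomial]
    by_cases hmd : ∀ i, m i = d i
    · have : m = Finsupp.equivFunOnFinite.symm d := Finsupp.ext hmd
      rw [if_pos this, prod_eq_one, mul_one]
      intro i _
      have := hA i
      have := hmd i
      rw [sum_pow_div_prod_erase_sub _ (by omega), if_pos (by omega)]
    · obtain ⟨j, hj⟩ : ∃ j, m j < d j := by
        by_contra! h
        exact hmd fun i => ((sum_eq_sum_iff_of_le fun i _ => h i).1
          (le_antisymm (sum_le_sum fun i _ => h i) hm) i (mem_univ i)).symm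
      have := hA j
      rw [if_neg (fun h => by simp [h] at hj), prod_eq_zero (mem_univ j), mul_zero]
      rw [sum_pow_div_prod_erase_sub _ (by omega), if_neg (by omega)]
  conv_lhs => rw [f.as_sum, coeff_sum]
  rw [sum_congr rfl hmono, sum_comm]
  refine sum_congr rfl fun z _ => ?_
  rw [← sum_div, ← map_sum, ← f.as_sum]

end Lagrange

theorem totalDegree_prod_X_sub_C_mul_X_le {R σ : Type*} [CommRing R] [Nontrivial R]
    (s : Finset ℕ) (i j : σ) (c : ℕ → R) : (∏ l ∈ s, (X i - C (c l) * X j)).totalDegree ≤ #s := by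
  refine (totalDegree_finsetProd _ _).trans ?_
  refine (sum_le_sum (g := fun _ => 1) fun l _ => ?_).trans (by simp)
  refine (totalDegree_sub _ _).trans (max_le ((totalDegree_X _).le) ?_)
  exact (totalDegree_mul _ _).trans (by simp [totalDegree_X])

theorem Finset.sum_filter_lt_max'_add {ι M : Type*} [LinearOrder ι] [AddCommMonoid M]
    (S : Finset ι) (hS : S.Nonempty) (f : ι → M) :
    ∑ k ∈ S with k < S.max' hS, f k + f (S.max' hS) = ∑ k ∈ S, f k := by
  have : S.filter (· < S.max' hS) = S.erase (S.max' hS) := by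
    ext k
    simp only [mem_filter, mem_erase]
    exact ⟨fun h => ⟨h.2.ne, h.1⟩, fun h => ⟨h.2, lt_of_le_of_ne (S.le_max' k h.2) h.1⟩⟩
  rw [this, sum_erase_add _ _ (S.max'_mem hS)]

theorem exists_first_of_separated {ι : Type*} [LinearOrder ι] (a t : ι → ℕ) (S : Finset ι)
    (hS : S.Nonempty) (hsep : ∀ i ∈ S, ∀ j ∈ S, i < j → t i + a i ≤ t j ∨ t j + a j < t i) :
    ∃ m ∈ S, ∀ j ∈ S, j ≠ m → t m + a m ≤ t j ∧ (j < m → t m + a m < t j) := by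
  -- the leftmost interval, the earliest one among ties
  obtain ⟨m, hmS, hmin⟩ := S.exists_min_image (fun i => toLex (t i, i)) hS
  refine ⟨m, hmS, fun j hj hjm => ?_⟩
  have := Prod.Lex.toLex_le_toLex'.1 (hmin j hj)
  rcases lt_or_gt_of_ne hjm with hlt | hgt
  · have := hsep j hj m hmS hlt
    grind
  · have := hsep m hmS j hj hgt
    grind

/-- Read `[t i, t i + a i)` as intervals inside `[b, b + ∑ a)`; by `hsep`, an interval lying to the
left of one with a smaller index leaves a gap of at least one. Then there is no room for any
gap, so the intervals are laid out in index order, without gaps. -/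
theorem eq_add_sum_filter_lt_of_separated {ι : Type*} [LinearOrder ι] (a t : ι → ℕ)
    (S : Finset ι) (b : ℕ) (hlow : ∀ i ∈ S, b ≤ t i) (hup : ∀ i ∈ S, t i + a i ≤ b + ∑ j ∈ S, a j)
    (hsep : ∀ i ∈ S, ∀ j ∈ S, i < j → t i + a i ≤ t j ∨ t j + a j < t i) :
    ∀ i ∈ S, t i = b + ∑ j ∈ S with j < i, a j := by
  induction S using Finset.strongInduction generalizing b with
  | H S ih =>
  rcases S.eq_empty_or_nonempty with rfl | hne
  · simp
  obtain ⟨m, hmS, hafter⟩ := exists_first_of_separated a t S hne hsep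
  have htail := ih (S.erase m) (S.erase_ssubset hmS) (t m + a m)
    (fun j hj => (hafter j (S.mem_of_mem_erase hj) (S.ne_of_mem_erase hj)).1)
    (fun j hj => by
      have hj := hup j (S.mem_of_mem_erase hj)
      rw [← S.add_sum_erase a hmS] at hj
      have := hlow m hmS
      omega)
    (fun i hi j hj => hsep i (S.mem_of_mem_erase hi) j (S.mem_of_mem_erase hj))
  have hm_min : ∀ j ∈ S, m ≤ j := by
    by_contra! ⟨j, hjS, hjm⟩
    set j₀ := S.min' hne
    have hj₀m : j₀ < m := (S.min'_le j hjS).trans_lt hjm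
    have := htail j₀ (mem_erase.2 ⟨hj₀m.ne, S.min'_mem hne⟩)
    rw [sum_eq_zero fun k hk => absurd (mem_filter.1 hk).2
      (not_lt.2 (S.min'_le k (S.mem_of_mem_erase (mem_filter.1 hk).1)))] at this
    have := (hafter j₀ (S.min'_mem hne) hj₀m.ne).2 hj₀m
    omega
  have hshift : ∀ j ∈ S, t j = t m + ∑ k ∈ S with k < j, a k := by
    intro j hj
    rcases eq_or_ne j m with rfl | hjm
    · rw [sum_eq_zero fun k hk => absurd (hm_min k (mem_filter.1 hk).1)
        (not_le.2 (mem_filter.1 hk).2), add_zero]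
    · have hmj : m < j := lt_of_le_of_ne (hm_min j hj) (Ne.symm hjm)
      rw [htail j (mem_erase.2 ⟨hjm, hj⟩), filter_erase,
        ← add_sum_erase _ a (mem_filter.2 ⟨hmS, hmj⟩)]
      ring
  have htm : t m = b := by
    have := hup _ (S.max'_mem hne)
    rw [hshift _ (S.max'_mem hne), add_assoc, S.sum_filter_lt_max'_add hne] at this
    have := hlow m hmS
    omega
  intro i hi
  rw [hshift i hi, htm]

section TriangularProducts

variable {M : Type*} [CommMonoid M]

theorem prod_range_sum_eq_prod_prod (g : ℕ → M) (a : ℕ → ℕ) (n : ℕ) :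
    ∏ t ∈ range (∑ i ∈ range n, a i), g t =
      ∏ i ∈ range n, ∏ l ∈ range (a i), g (∑ k ∈ range i, a k + l) := by
  induction n with
  | zero => simp
  | succ n ih => rw [sum_range_succ, prod_range_add, ih, prod_range_succ]

theorem prod_triangle_pow (x : ℕ → M) (a : ℕ → ℕ) (n : ℕ) :
    ∏ j ∈ range n, ∏ i ∈ range j, x i ^ a j = ∏ i ∈ range n, x i ^ ∑ j ∈ Ico (i + 1) n, a j := by
  induction n with
  | zero => simp
  | succ n ih =>
    rw [prod_range_succ, ih, prod_range_succ _ n, Ico_self, sum_empty, pow_zero, mul_one,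
      ← prod_mul_distrib]
    refine prod_congr rfl fun i hi => ?_
    rw [sum_Ico_succ_top (by simpa using hi), pow_add]

theorem prod_triangle_telescope (F : ℕ → ℕ → M) (hF : ∀ i, F i i = 1) (n : ℕ) :
    (∏ j ∈ range n, ∏ i ∈ range j, F i (j + 1)) * ∏ i ∈ range n, F i (i + 1) =
      F 0 n * (∏ i ∈ range n, F 0 i * F (i + 1) n) * ∏ j ∈ range n, ∏ i ∈ range j, F (i + 1) j := by
  induction n with
  | zero => simp [hF]
  | succ n ih =>
    have hcol : ∏ i ∈ range (n + 1), F i (n + 1) = F 0 (n + 1) * ∏ i ∈ range n, F (i + 1) (n + 1) :=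
      by rw [prod_range_succ', mul_comm]
    calc (∏ j ∈ range (n + 1), ∏ i ∈ range j, F i (j + 1)) * ∏ i ∈ range (n + 1), F i (i + 1)
        = ((∏ j ∈ range n, ∏ i ∈ range j, F i (j + 1)) * ∏ i ∈ range n, F i (i + 1)) *
            ∏ i ∈ range (n + 1), F i (n + 1) := by
          rw [prod_range_succ, prod_range_succ, prod_range_succ (fun i => F i (n + 1))]
          ac_rfl
      _ = _ := by
          rw [ih, hcol, prod_range_succ (fun j => ∏ i ∈ range j, F (i + 1) j),
            prod_range_succ (fun i => F 0 i * F (i + 1) (n + 1)), hF, mul_one]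
          simp only [prod_mul_distrib]
          ac_rfl

end TriangularProducts

theorem Fin.prod_filter_lt_eq_prod_range {M : Type*} [CommMonoid M] (n : ℕ) (G : ℕ → ℕ → M) :
    ∏ p ∈ univ.filter (fun p : Fin n × Fin n => p.1 < p.2), G p.1 p.2 =
      ∏ j ∈ range n, ∏ i ∈ range j, G i j := by
  rw [prod_filter, Fintype.prod_prod_type, prod_comm,
    ← Fin.prod_univ_eq_prod_range (fun j => ∏ i ∈ range j, G i j)]
  refine prod_congr rfl fun j _ => ?_
  rw [← prod_filter, filter_gt_eq_Iio, ← Nat.Iio_eq_range, ← Fin.map_valEmbedding_Iio, prod_map]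
  rfl

theorem sum_filter_lt_add_eq_sum_sum_erase {ι M : Type*} [Fintype ι] [LinearOrder ι]
    [AddCommMonoid M] (f : ι → M) :
    ∑ p ∈ univ.filter (fun p : ι × ι => p.1 < p.2), (f p.1 + f p.2) =
      ∑ i, ∑ j ∈ univ.erase i, f j := by
  calc _ = ∑ i, ∑ j, (if i < j then f i else 0) + ∑ i, ∑ j, (if i < j then f j else 0) := by
        simp only [sum_filter, Fintype.sum_prod_type, ← sum_add_distrib, ← ite_add_zero]
    _ = ∑ i, ∑ j, ((if j < i then f j else 0) + if i < j then f j else 0) := by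
        rw [sum_comm (f := fun i j => if i < j then f i else 0), ← sum_add_distrib]
        simp only [← sum_add_distrib]
    _ = ∑ i, ∑ j, if j ≠ i then f j else 0 := by
        refine sum_congr rfl fun i _ => sum_congr rfl fun j _ => ?_
        rcases lt_trichotomy j i with h | rfl | h
        · simp [h, h.ne, h.not_gt]
        · simp
        · simp [h, h.ne', h.not_gt]
    _ = _ := by simp only [← sum_filter, filter_ne']

theorem sum_range_eq_add_add_sum_Ico {M : Type*} [AddCommMonoid M] (f : ℕ → M) {i j : ℕ}
    (hij : i < j) : ∑ k ∈ range j, f k = ∑ k ∈ range i, f k + f i + ∑ k ∈ Ico (i + 1) j, f k := by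
  rw [← sum_range_succ, sum_range_add_sum_Ico _ hij]

theorem q_pow_injective : Function.Injective (q ^ · : ℕ → RatFunc ℚ) := by
  intro x y h
  simp only [q, ← RatFunc.algebraMap_X, ← map_pow] at h
  simpa using congrArg Polynomial.natDegree (RatFunc.algebraMap_injective ℚ h)

theorem q_pow_sub_q_pow_ne_zero {x y : ℕ} (h : x ≠ y) : q ^ x - q ^ y ≠ 0 :=
  sub_ne_zero.2 (q_pow_injective.ne h)

theorem qFac_ne_zero (m : ℕ) : qFac m ≠ 0 :=
  prod_ne_zero_iff.2 fun l _ => by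
    simpa using q_pow_sub_q_pow_ne_zero (show 0 ≠ l + 1 by omega)

theorem qFac_zero : qFac 0 = 1 :=
  prod_range_zero _

theorem qFac_succ (m : ℕ) : qFac (m + 1) = qFac m * (1 - q ^ (m + 1)) :=
  prod_range_succ _ m

theorem prod_q_pow_sub_lower_mul_qFac (x m g : ℕ) :
    (∏ l ∈ range m, (q ^ (x + m + g) - q ^ (x + l))) * qFac g =
      (∏ l ∈ range m, -q ^ (x + l)) * qFac (g + m) := by
  induction m generalizing g with
  | zero => simp
  | succ m ih =>
    have hstep : (q ^ (x + (m + 1) + g) - q ^ (x + m)) * qFac g = -q ^ (x + m) * qFac (g + 1) := by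
      rw [qFac_succ, show x + (m + 1) + g = x + m + (g + 1) by omega, pow_add _ (x + m)]
      ring
    calc (∏ l ∈ range (m + 1), (q ^ (x + (m + 1) + g) - q ^ (x + l))) * qFac g
        = (∏ l ∈ range m, (q ^ (x + m + (g + 1)) - q ^ (x + l))) * qFac (g + 1) * -q ^ (x + m) := by
          rw [prod_range_succ, mul_assoc, hstep, show x + (m + 1) + g = x + m + (g + 1) by omega]
          ring
      _ = (∏ l ∈ range (m + 1), -q ^ (x + l)) * qFac (g + (m + 1)) := by
          rw [ih, prod_range_succ, show g + 1 + m = g + (m + 1) by omega]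
          ring

theorem prod_q_pow_sub_upper_mul_qFac (x h b : ℕ) :
    (∏ l ∈ range b, (q ^ x - q ^ (x + h + 1 + l))) * qFac h = (q ^ x) ^ b * qFac (h + b) := by
  induction b with
  | zero => simp
  | succ b ih =>
    rw [prod_range_succ, mul_right_comm, ih, ← add_assoc, qFac_succ,
      show x + h + 1 + b = x + (h + b + 1) by omega, pow_add]
    ring

theorem prod_erase_q_pow_sub (x r : ℕ) :
    ∏ t ∈ (range (x + r + 1)).erase x, (q ^ x - q ^ t) =
      (∏ t ∈ range x, -q ^ t) * qFac x * ((q ^ x) ^ r * qFac r) := by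
  have hsplit :
      (range (x + r + 1)).erase x = range x ∪ (range r).map (addLeftEmbedding (x + 1)) := by
    ext t
    simp only [mem_erase, mem_range, mem_union, mem_map, addLeftEmbedding_apply]
    constructor
    · intro h
      by_cases htx : t < x
      · exact Or.inl htx
      · exact Or.inr ⟨t - (x + 1), by omega, by omega⟩
    · rintro (h | ⟨l, hl, rfl⟩) <;> omega
  have hdisj : Disjoint (range x) ((range r).map (addLeftEmbedding (x + 1))) := by
    simp only [disjoint_left, mem_range, mem_map, addLeftEmbedding_apply]
    rintro t ht ⟨l, -, rfl⟩
    omega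
  have hlow := prod_q_pow_sub_lower_mul_qFac 0 x 0
  have hhigh := prod_q_pow_sub_upper_mul_qFac x 0 r
  simp only [zero_add, add_zero, qFac_zero, mul_one] at hlow hhigh
  rw [hsplit, prod_union hdisj, prod_map, hlow, ← hhigh]
  simp only [addLeftEmbedding_apply, add_right_comm x 1]

theorem prod_dyson_pair_mul_qFac (x m g b : ℕ) :
    (∏ l ∈ range m, (q ^ (x + m + g) - q ^ (x + l))) *
        (∏ l ∈ range b, (q ^ x - q ^ (x + m + g + 1 + l))) * qFac g =
      (∏ l ∈ range m, -q ^ (x + l)) * (q ^ x) ^ b * qFac (g + m + b) := by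
  calc _ = ((∏ l ∈ range m, (q ^ (x + m + g) - q ^ (x + l))) * qFac g) *
          ∏ l ∈ range b, (q ^ x - q ^ (x + (g + m) + 1 + l)) := by
        rw [show x + m + g = x + (g + m) by omega]; ring
    _ = (∏ l ∈ range m, -q ^ (x + l)) *
          ((∏ l ∈ range b, (q ^ x - q ^ (x + (g + m) + 1 + l))) * qFac (g + m)) := by
        rw [prod_q_pow_sub_lower_mul_qFac]; ring
    _ = _ := by rw [prod_q_pow_sub_upper_mul_qFac]; ring

theorem prod_dyson_pair_partialSum_mul_qFac (a c : ℕ → ℕ) (hc : ∀ i, c i = ∑ k ∈ range i, a k)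
    {i j : ℕ} (hij : i < j) :
    (∏ l ∈ range (a i), (q ^ c j - q ^ (c i + l))) *
        (∏ l ∈ range (a j), (q ^ c i - q ^ (c j + 1 + l))) * qFac (∑ k ∈ Ico (i + 1) j, a k) =
      (∏ l ∈ range (a i), -q ^ (c i + l)) * (q ^ c i) ^ a j * qFac (∑ k ∈ Ico i (j + 1), a k) := by
  rw [hc j, sum_range_eq_add_add_sum_Ico a hij, ← hc i, prod_dyson_pair_mul_qFac,
    sum_Ico_succ_top hij.le, sum_eq_sum_Ico_succ_bot hij, add_comm (a i)]

theorem prod_dyson_pairs_mul_prod_qFac (a c : ℕ → ℕ) (hc : ∀ i, c i = ∑ k ∈ range i, a k)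
    (n : ℕ) :
    (∏ j ∈ range n, ∏ i ∈ range j,
        ((∏ l ∈ range (a i), (q ^ c j - q ^ (c i + l))) *
          ∏ l ∈ range (a j), (q ^ c i - q ^ (c j + 1 + l)))) * ∏ i ∈ range n, qFac (a i) =
      qFac (c n) * ∏ i ∈ range n, ∏ t ∈ (range (c n - a i + 1)).erase (c i), (q ^ c i - q ^ t) := by
  set F : ℕ → ℕ → RatFunc ℚ := fun i j => qFac (∑ k ∈ Ico i j, a k)
  have hF_zero : ∀ i, F 0 i = qFac (c i) := fun i => by rw [hc, range_eq_Ico]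
  have hF_succ : ∀ i, F i (i + 1) = qFac (a i) := fun i => by simp [F]
  have hsign : ∀ j, ∏ i ∈ range j, ∏ l ∈ range (a i), -q ^ (c i + l) = ∏ t ∈ range (c j), -q ^ t :=
    fun j => by simp only [hc, prod_range_sum_eq_prod_prod]
  have hdenom : ∀ i ∈ range n, ∏ t ∈ (range (c n - a i + 1)).erase (c i), (q ^ c i - q ^ t) =
      (∏ t ∈ range (c i), -q ^ t) * F 0 i *
        ((q ^ c i) ^ (∑ k ∈ Ico (i + 1) n, a k) * F (i + 1) n) := by
    intro i hi
    rw [hc n, sum_range_eq_add_add_sum_Ico a (mem_range.1 hi), ← hc i, hF_zero,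
      show c i + a i + ∑ k ∈ Ico (i + 1) n, a k - a i = c i + ∑ k ∈ Ico (i + 1) n, a k by omega,
      prod_erase_q_pow_sub]
  set X := ∏ j ∈ range n, ∏ i ∈ range j, F (i + 1) j
  have hX : X ≠ 0 := prod_ne_zero_iff.2 fun j _ => prod_ne_zero_iff.2 fun i _ => qFac_ne_zero _
  refine mul_right_cancel₀ hX ?_
  calc _ = (∏ j ∈ range n, ∏ i ∈ range j,
          ((∏ l ∈ range (a i), (q ^ c j - q ^ (c i + l))) *
            (∏ l ∈ range (a j), (q ^ c i - q ^ (c j + 1 + l))) * F (i + 1) j)) *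
          ∏ i ∈ range n, F i (i + 1) := by
        simp only [hF_succ, X, prod_mul_distrib]; ring
    _ = (∏ j ∈ range n, ∏ i ∈ range j,
          ((∏ l ∈ range (a i), -q ^ (c i + l)) * (q ^ c i) ^ a j * F i (j + 1))) *
          ∏ i ∈ range n, F i (i + 1) :=
        congrArg (· * _) (prod_congr rfl fun j hj => prod_congr rfl fun i hi =>
          prod_dyson_pair_partialSum_mul_qFac a c hc (mem_range.1 hi))
    _ = (∏ j ∈ range n, ∏ t ∈ range (c j), -q ^ t) *
          (∏ i ∈ range n, (q ^ c i) ^ ∑ k ∈ Ico (i + 1) n, a k) *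
          ((∏ j ∈ range n, ∏ i ∈ range j, F i (j + 1)) * ∏ i ∈ range n, F i (i + 1)) := by
        simp only [prod_mul_distrib, hsign, prod_triangle_pow]; ring
    _ = _ := by
        rw [prod_triangle_telescope F (fun i => by simp [F, qFac_zero]), hF_zero,
          prod_congr rfl hdenom]
        simp only [prod_mul_distrib]; ring

theorem totalDegree_dysonPoly_le (n : ℕ) (a : Fin n → ℕ) :
    (dysonPoly n a).totalDegree ≤ ∑ k, ((∑ j, a j) - a k) := by
  refine (totalDegree_finsetProd _ _).trans ?_
  calc _ ≤ ∑ p ∈ univ.filter (fun p : Fin n × Fin n => p.1 < p.2), (a p.1 + a p.2) :=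
        sum_le_sum fun p _ => (totalDegree_mul _ _).trans (add_le_add
          ((totalDegree_prod_X_sub_C_mul_X_le _ _ _ _).trans (card_range _).le)
          ((totalDegree_prod_X_sub_C_mul_X_le _ _ _ _).trans (card_range _).le))
    _ = ∑ k, ∑ j ∈ univ.erase k, a j := sum_filter_lt_add_eq_sum_sum_erase a
    _ = _ := sum_congr rfl fun k _ => eq_tsub_of_add_eq (sum_erase_add _ _ (mem_univ k))

theorem eval_q_pow_dysonPoly (n : ℕ) (a t : Fin n → ℕ) :
    eval (fun k => q ^ t k) (dysonPoly n a) =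
      ∏ p ∈ univ.filter (fun p : Fin n × Fin n => p.1 < p.2),
        ((∏ l ∈ range (a p.1), (q ^ t p.2 - q ^ (t p.1 + l))) *
          ∏ l ∈ range (a p.2), (q ^ t p.1 - q ^ (t p.2 + 1 + l))) := by
  simp only [dysonPoly, map_prod, map_mul, map_sub, eval_X, eval_C, ← pow_add]
  simp only [add_comm, add_left_comm]

theorem separated_of_eval_q_pow_dysonPoly_ne_zero {n : ℕ} {a t : Fin n → ℕ}
    (h : eval (fun k => q ^ t k) (dysonPoly n a) ≠ 0) {i j : Fin n} (hij : i < j) :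
    t i + a i ≤ t j ∨ t j + a j < t i := by
  rw [eval_q_pow_dysonPoly, prod_ne_zero_iff] at h
  obtain ⟨hU, hV⟩ := mul_ne_zero_iff.1 (h (i, j) (by simpa using hij))
  dsimp only at hU hV
  rw [prod_ne_zero_iff] at hU hV
  by_contra! hcon
  rcases le_or_gt (t i) (t j) with hle | hlt
  · exact hU (t j - t i) (mem_range.2 (by omega)) (by rw [Nat.add_sub_cancel' hle, sub_self])
  · exact hV (t i - t j - 1) (mem_range.2 (by omega))
      (by rw [show t j + 1 + (t i - t j - 1) = t i by omega, sub_self])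

section DysonGrid

open scoped Classical

noncomputable def dysonGrid {n : ℕ} (a : Fin n → ℕ) (k : Fin n) : Finset (RatFunc ℚ) :=
  (range ((∑ j, a j) - a k + 1)).image (q ^ ·)

theorem card_dysonGrid {n : ℕ} (a : Fin n → ℕ) (k : Fin n) :
    #(dysonGrid a k) = (∑ j, a j) - a k + 1 := by
  rw [dysonGrid, card_image_of_injective _ q_pow_injective, card_range]

theorem eq_q_pow_partialSum_of_eval_dysonPoly_ne_zero {n : ℕ} {a : Fin n → ℕ}
    {z : Fin n → RatFunc ℚ} (hz : z ∈ Fintype.piFinset (dysonGrid a))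
    (h : eval z (dysonPoly n a) ≠ 0) :
    z = fun k => q ^ ∑ j ∈ Iio k, a j := by
  choose t ht hzt using fun k => mem_image.1 (Fintype.mem_piFinset.1 hz k)
  obtain rfl : z = fun k => q ^ t k := funext fun k => (hzt k).symm
  have hpos := eq_add_sum_filter_lt_of_separated a t univ 0 (fun _ _ => Nat.zero_le _)
    (fun k _ => by
      have := mem_range.1 (ht k)
      have := single_le_sum (fun j _ => Nat.zero_le (a j)) (mem_univ k)
      omega)
    (fun i _ j _ hij => separated_of_eval_q_pow_dysonPoly_ne_zero h hij)
  funext k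
  rw [hpos k (mem_univ k), zero_add, filter_gt_eq_Iio]

theorem q_pow_partialSum_mem_piFinset_dysonGrid {n : ℕ} (a : Fin n → ℕ) :
    (fun k => q ^ ∑ j ∈ Iio k, a j) ∈ Fintype.piFinset (dysonGrid a) := by
  refine Fintype.mem_piFinset.2 fun k => mem_image_of_mem _ (mem_range.2 ?_)
  have : ∑ j ∈ Iio k, a j + a k ≤ ∑ j, a j := by
    rw [add_comm, ← sum_insert (by simp)]
    exact sum_le_sum_of_subset (subset_univ _)
  omega

theorem eval_dysonPoly_partialSum_mul (n : ℕ) (a : Fin n → ℕ) :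
    eval (fun k => q ^ ∑ j ∈ Iio k, a j) (dysonPoly n a) * ∏ i, qFac (a i) =
      qFac (∑ j, a j) * ∏ k, ∏ y ∈ (dysonGrid a k).erase (q ^ ∑ j ∈ Iio k, a j),
        (q ^ ∑ j ∈ Iio k, a j - y) := by
  set a' : ℕ → ℕ := fun k => if h : k < n then a ⟨k, h⟩ else 0
  have ha' : ∀ k : Fin n, a k = a' k := fun k => by simp [a']
  have hc : ∀ k : Fin n, ∑ j ∈ Iio k, a j = ∑ j ∈ range k, a' j := fun k => by
    rw [← Nat.Iio_eq_range, ← Fin.map_valEmbedding_Iio, sum_map]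
    exact sum_congr rfl fun j _ => ha' j
  have hσ : ∑ j, a j = ∑ j ∈ range n, a' j := by
    rw [← Fin.sum_univ_eq_sum_range]
    exact sum_congr rfl fun j _ => ha' j
  have hdenom : ∀ k : Fin n, ∏ y ∈ (dysonGrid a k).erase (q ^ ∑ j ∈ Iio k, a j),
      (q ^ ∑ j ∈ Iio k, a j - y) = ∏ t ∈ (range ((∑ j ∈ range n, a' j) - a' k + 1)).erase
        (∑ j ∈ range k, a' j), (q ^ ∑ j ∈ range k, a' j - q ^ t) := fun k => by
    rw [dysonGrid, ← image_erase q_pow_injective, prod_image q_pow_injective.injOn, hc, hσ, ha']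
  rw [eval_q_pow_dysonPoly, prod_congr rfl fun k _ => hdenom k]
  have key := prod_dyson_pairs_mul_prod_qFac a' _ (fun _ => rfl) n
  rw [← Fin.prod_filter_lt_eq_prod_range, ← Fin.prod_univ_eq_prod_range,
    ← Fin.prod_univ_eq_prod_range] at key
  simp only [hc, hσ]
  simp only [ha']
  exact key

end DysonGrid

/-- The Zeilberger–Bressoud q-Dyson theorem: the constant term of
`∏_{1 ≤ i < j ≤ n} (x_i/x_j;q)_{a_i} (q x_j/x_i;q)_{a_j}` equals
`(q;q)_{a_1+⋯+a_n} / ((q;q)_{a_1} ⋯ (q;q)_{a_n})`.  The constant term is expressed as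
the coefficient of `∏_k x_k^{|a| - a_k}` in the cleared polynomial `dysonPoly n a`. -/
theorem qDyson (n : ℕ) (a : Fin n → ℕ) :
    MvPolynomial.coeff (Finsupp.equivFunOnFinite.symm fun k => (∑ j, a j) - a k)
        (dysonPoly n a) =
      qFac (∑ j, a j) / ∏ i, qFac (a i) := by
  classical
  have hdenom : ∏ k, ∏ y ∈ (dysonGrid a k).erase (q ^ ∑ j ∈ Iio k, a j),
      (q ^ ∑ j ∈ Iio k, a j - y) ≠ 0 :=
    prod_ne_zero_iff.2 fun k _ => prod_ne_zero_iff.2 fun y hy =>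
      sub_ne_zero.2 (ne_of_mem_erase hy).symm
  rw [coeff_eq_sum_piFinset _ _ (card_dysonGrid a) _ (totalDegree_dysonPoly_le n a),
    sum_eq_single_of_mem _ (q_pow_partialSum_mem_piFinset_dysonGrid a) fun z hz hne => by
      rw [not_ne_iff.1 (mt (eq_q_pow_partialSum_of_eval_dysonPoly_ne_zero hz) hne), zero_div],
    div_eq_div_iff hdenom (prod_ne_zero_iff.2 fun i _ => qFac_ne_zero _)]
  exact eval_dysonPoly_partialSum_mul n a
end
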